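/- Let A be a 2^n × 2^n complex matrix with |a_{ij}| ≤ 1, and let O_A be the unitary on 2·4^n dimensions acting by O_A |0⟩|i⟩|j⟩ = (a_{ij}|0⟩ + √(1−|a_{ij}|²)|1⟩)|i⟩|j⟩. Then the matrix U_A = (I₂ ⊗ H^⊗n ⊗ I_{2^n}) (I₂ ⊗ SWAP) O_A (I₂ ⊗ H^⊗n ⊗ I_{2^n}), where SWAP exchanges the two n-qubit registers, satisfies ⟨0|⟨0|^⊗n⟨i| U_A |0⟩|0⟩^⊗n|j⟩ = a_{ij}/2^n for all i, j; i.e., U_A is a (1/2^n, n+1)-block-encoding of A. -/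

import Mathlib

open Kronecker

/-- The `n`-qubit Hadamard transform `H^⊗n`: its `(i,j)` entry is
`(1/√2)^n · (−1)^(i·j)` where `i·j` is the bitwise dot product. -/
noncomputable def hadamardPow (n : ℕ) : Matrix (Fin (2 ^ n)) (Fin (2 ^ n)) ℂ :=
  fun i j =>
    ((1 / Real.sqrt 2 : ℝ) ^ n : ℝ) *
      (-1 : ℂ) ^ ((Finset.range n).filter
        (fun t => i.val.testBit t ∧ j.val.testBit t)).card

/-- The swap of two `n`-qubit registers: `SWAP |i⟩|j⟩ = |j⟩|i⟩`. -/
def swapMatrix (N : ℕ) : Matrix (Fin N × Fin N) (Fin N × Fin N) ℂ :=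
  fun p q => if p.1 = q.2 ∧ p.2 = q.1 then 1 else 0

lemma hadamardPow_zero_left (n : ℕ) (k : Fin (2 ^ n)) :
    hadamardPow n 0 k = (((1 / Real.sqrt 2 : ℝ) ^ n : ℝ) : ℂ) := by
  unfold hadamardPow
  simp [Nat.zero_testBit]

lemma hadamardPow_zero_right (n : ℕ) (k : Fin (2 ^ n)) :
    hadamardPow n k 0 = (((1 / Real.sqrt 2 : ℝ) ^ n : ℝ) : ℂ) := by
  unfold hadamardPow
  simp [Nat.zero_testBit]


/-- Let `A` be a `2^n × 2^n` complex matrix with `|a_{ij}| ≤ 1`, and let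
`O_A` be a unitary on `2·4^n` dimensions acting by
`O_A |0⟩|i⟩|j⟩ = (a_{ij}|0⟩ + √(1−|a_{ij}|²)|1⟩)|i⟩|j⟩`.  Then
`U_A = (I₂ ⊗ H^⊗n ⊗ I)(I₂ ⊗ SWAP) O_A (I₂ ⊗ H^⊗n ⊗ I)` satisfies
`⟨0|⟨0|^⊗n⟨i| U_A |0⟩|0⟩^⊗n|j⟩ = a_{ij}/2^n`, i.e. `U_A` is a
`(1/2^n, n+1)`-block-encoding of `A`. -/
theorem fable_blockEncoding (n : ℕ) (A : Matrix (Fin (2 ^ n)) (Fin (2 ^ n)) ℂ)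
    (hA : ∀ i j, ‖A i j‖ ≤ 1)
    (OA : Matrix (Fin 2 × Fin (2 ^ n) × Fin (2 ^ n)) (Fin 2 × Fin (2 ^ n) × Fin (2 ^ n)) ℂ)
    (hOA : OA ∈ Matrix.unitaryGroup (Fin 2 × Fin (2 ^ n) × Fin (2 ^ n)) ℂ)
    (hact : ∀ (i j : Fin (2 ^ n)) (b' : Fin 2) (i' j' : Fin (2 ^ n)),
      OA (b', i', j') (0, i, j) =
        if i' = i ∧ j' = j then
          (if b' = 0 then A i j
           else (Real.sqrt (1 - ‖A i j‖ ^ 2) : ℝ))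
        else 0)
    (UA : Matrix (Fin 2 × Fin (2 ^ n) × Fin (2 ^ n)) (Fin 2 × Fin (2 ^ n) × Fin (2 ^ n)) ℂ)
    (hUA : UA =
      ((1 : Matrix (Fin 2) (Fin 2) ℂ) ⊗ₖ
          (hadamardPow n ⊗ₖ (1 : Matrix (Fin (2 ^ n)) (Fin (2 ^ n)) ℂ))) *
        ((1 : Matrix (Fin 2) (Fin 2) ℂ) ⊗ₖ swapMatrix (2 ^ n)) * OA *
        ((1 : Matrix (Fin 2) (Fin 2) ℂ) ⊗ₖ
          (hadamardPow n ⊗ₖ (1 : Matrix (Fin (2 ^ n)) (Fin (2 ^ n)) ℂ)))) :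
    ∀ i j : Fin (2 ^ n), UA (0, 0, i) (0, 0, j) = A i j / 2 ^ n := by
  intro i j
  set c : ℂ := (((1 / Real.sqrt 2 : ℝ) ^ n : ℝ) : ℂ) with hc
  set M1 : Matrix (Fin 2 × Fin (2 ^ n) × Fin (2 ^ n)) (Fin 2 × Fin (2 ^ n) × Fin (2 ^ n)) ℂ :=
    ((1 : Matrix (Fin 2) (Fin 2) ℂ) ⊗ₖ
      (hadamardPow n ⊗ₖ (1 : Matrix (Fin (2 ^ n)) (Fin (2 ^ n)) ℂ))) with hM1
  set S : Matrix (Fin 2 × Fin (2 ^ n) × Fin (2 ^ n)) (Fin 2 × Fin (2 ^ n) × Fin (2 ^ n)) ℂ :=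
    ((1 : Matrix (Fin 2) (Fin 2) ℂ) ⊗ₖ swapMatrix (2 ^ n)) with hS
  -- step 1 : (OA * M1) (0, i', k) (0, 0, j) = c * if k = j then A i' j else 0
  have step1 : ∀ (i' k : Fin (2 ^ n)),
      (OA * M1) (0, i', k) (0, 0, j) = c * (if k = j then A i' j else 0) := by
    intro i' k
    rw [Matrix.mul_apply]
    rw [Fintype.sum_prod_type]
    rw [Fin.sum_univ_two]
    simp only [hM1, Matrix.kroneckerMap_apply, Matrix.one_apply, Fintype.sum_prod_type]
    simp only [if_pos rfl, one_ne_zero, if_neg (by decide : ¬ ((1:Fin 2) = 0)), if_true,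
      if_false, one_mul, zero_mul, mul_zero, Finset.sum_const_zero, add_zero]
    have : ∀ k' l' : Fin (2 ^ n),
        OA (0, i', k) (0, k', l') * (hadamardPow n k' 0 * (if l' = j then 1 else 0)) =
        (if l' = j then (if k' = i' then c * A i' j * (if k = j then 1 else 0) else 0) else 0) := by
      intro k' l'
      rw [hact k' l' 0 i' k]
      by_cases h1 : l' = j
      · subst h1
        by_cases h2 : k' = i'
        · subst h2
          simp [hadamardPow_zero_right, ← hc]
          by_cases h3 : k = l' <;> simp [h3, hc] <;> push_cast <;> ring
        · simp [Ne.symm h2, h2]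
      · simp [h1]
    simp only [this]
    simp [Finset.sum_ite_eq, Finset.sum_ite_eq', mul_comm, mul_assoc]
  -- step 2 : (S * (OA * M1)) (0, k, i') (0, 0, j)
  have step2 : ∀ (k i' : Fin (2 ^ n)),
      (S * (OA * M1)) (0, k, i') (0, 0, j) = c * (if k = j then A i' j else 0) := by
    intro k i'
    rw [Matrix.mul_apply, Fintype.sum_prod_type, Fin.sum_univ_two]
    simp only [hS, Matrix.kroneckerMap_apply, Matrix.one_apply, swapMatrix]
    simp only [if_pos rfl, one_ne_zero, if_neg (by decide : ¬ ((1:Fin 2) = 0)), if_true,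
      if_false, show ((0:Fin 2) = 1) = False by simp, one_mul,
      zero_mul, mul_zero, Finset.sum_const_zero, add_zero, Fintype.sum_prod_type]
    have : ∀ k' l' : Fin (2 ^ n),
        (if k = l' ∧ i' = k' then (1:ℂ) else 0) * (OA * M1) (0, k', l') (0, 0, j) =
        (if k' = i' then (if l' = k then (OA * M1) (0, i', k) (0,0,j) else 0) else 0) := by
      intro k' l'
      by_cases h1 : k' = i' <;> by_cases h2 : l' = k <;>
        simp [h1, h2] <;> aesop
    simp only [this]
    simp [Finset.sum_ite_eq, Finset.sum_ite_eq', step1]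
  have hcc : c * c = 1 / 2 ^ n := by
    rw [hc, ← Complex.ofReal_mul, ← mul_pow]
    have h2 : (1 / Real.sqrt 2) * (1 / Real.sqrt 2) = 1 / 2 := by
      rw [div_mul_div_comm, Real.mul_self_sqrt (by norm_num), one_mul]
    rw [h2]
    push_cast
    simp [one_div]
  have hM1e : ∀ (b b' : Fin 2) (k k' l l' : Fin (2 ^ n)),
      M1 (b, k, l) (b', k', l') =
        ((1 : Matrix (Fin 2) (Fin 2) ℂ) b b') *
          (hadamardPow n k k' * (1 : Matrix (Fin (2 ^ n)) (Fin (2 ^ n)) ℂ) l l') :=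
    fun _ _ _ _ _ _ => rfl
  rw [hUA, mul_assoc, mul_assoc]
  rw [Matrix.mul_apply, Fintype.sum_prod_type, Fin.sum_univ_two]
  simp only [hM1e, Matrix.one_apply, Fintype.sum_prod_type]
  simp only [if_pos rfl, one_ne_zero, if_neg (by decide : ¬ ((0:Fin 2) = 1)), if_true,
    if_false, one_mul, zero_mul, mul_zero, Finset.sum_const_zero, add_zero]
  have key : ∀ k l : Fin (2 ^ n),
      (hadamardPow n 0 k * if i = l then (1:ℂ) else 0) *
        (S * (OA * M1)) (0, k, l) (0, 0, j) =
      if l = i then (if k = j then c * c * A i j else 0) else 0 := by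
    intro k l
    by_cases h1 : l = i
    · subst h1
      simp only [if_pos rfl, mul_one, hadamardPow_zero_left, ← hc, step2]
      by_cases h2 : k = j <;> simp [h2] <;> ring
    · simp only [if_neg (fun h : i = l => h1 h.symm), mul_zero, zero_mul, if_neg h1]
  simp only [key]
  simp [Finset.sum_ite_eq, Finset.sum_ite_eq']
  rw [hcc]
  ring
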